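/- For x ⊆ [n] with |x| = k, where n/2 ≤ k ≤ n: the sets *(x) ∩ x and *(x)\x satisfy |*(x) ∩ x| − |*(x)\x| = 2k − n; furthermore 1(x) and 0(x) have equal size (n − |*(x)|)/2. -/

import Mathlib

/-!
Read the elements of `x` as opening and the other positions as closing brackets. An opening
bracket `i` has signature `1` exactly when it is matched, by the first `j > i` with
`c_x(i,j) = 0`, and a closing bracket `j` has signature `0` exactly when it is matched, by the
last `i < j` with `c_x(i,j) = 0`. Since `c_x` moves by `±1` at each step, these two matchings
are inverse to each other, so `|1(x)| = |0(x)|`; the remaining identities are counting.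
-/

/-- `c_x(i,j) = |x ∩ [i,j]| - |[i,j] \ x|`. -/
def cfun (x : Finset ℕ) (i j : ℕ) : ℤ :=
  ((Finset.Icc i j ∩ x).card : ℤ) - ((Finset.Icc i j \ x).card : ℤ)

-- The signature value of position `i` in `x ⊆ [n]`: `1`, `0`, or `2` (for `*`).
open Classical in
noncomputable def sgv (n : ℕ) (x : Finset ℕ) (i : ℕ) : ℕ :=
  if i ∈ x then (if ∃ j ∈ Finset.Ioc i n, cfun x i j = 0 then 1 else 2)
  else (if ∃ j ∈ Finset.Ico 1 i, cfun x j i = 0 then 0 else 2)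

open Finset

theorem exists_mem_Ioo_eq_zero_of_le_succ_add_one {f : ℕ → ℤ} {a b : ℕ} (hab : a ≤ b)
    (hstep : ∀ t ∈ Ico a b, f t ≤ f (t + 1) + 1) (ha : 0 < f a) (hb : f b < 0) :
    ∃ t ∈ Ioo a b, f t = 0 := by
  induction b, hab using Nat.le_induction with
  | base => omega
  | succ b hab ih =>
    by_cases hfb : f b < 0
    · obtain ⟨t, ht, hft⟩ := ih (fun t ht => hstep t (Ico_subset_Ico_right b.le_succ ht)) hfb
      exact ⟨t, Ioo_subset_Ioo_right b.le_succ ht, hft⟩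
    · have hfb0 : f b = 0 := by linarith [hstep b (mem_Ico.2 ⟨hab, b.lt_succ_self⟩)]
      exact ⟨b, mem_Ioo.2 ⟨lt_of_le_of_ne hab (by rintro rfl; omega), b.lt_succ_self⟩, hfb0⟩

section Matching

variable {x : Finset ℕ} {i j t : ℕ}

lemma cfun_eq_sum (x : Finset ℕ) (i j : ℕ) :
    cfun x i j = ∑ s ∈ Icc i j, if s ∈ x then (1 : ℤ) else -1 := by
  rw [sum_ite, sum_const, sum_const, filter_mem_eq_inter, cfun, sdiff_eq_filter]
  simp [sub_eq_add_neg]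

lemma cfun_self (x : Finset ℕ) (i : ℕ) : cfun x i i = if i ∈ x then 1 else -1 := by
  simp [cfun_eq_sum]

lemma cfun_add (x : Finset ℕ) (hit : i ≤ t) (htj : t ≤ j) :
    cfun x i t + cfun x (t + 1) j = cfun x i j := by
  rw [cfun_eq_sum, cfun_eq_sum, cfun_eq_sum, Icc_add_one_left_eq_Ioc,
    ← sum_union (disjoint_left.2 fun a ha hb => by simp only [mem_Icc, mem_Ioc] at ha hb; omega)]
  congr 1
  ext a
  simp only [mem_union, mem_Icc, mem_Ioc]
  omega

lemma cfun_le_cfun_succ_right_add_one (x : Finset ℕ) (hij : i ≤ j) :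
    cfun x i j ≤ cfun x i (j + 1) + 1 := by
  rw [← cfun_add x hij j.le_succ, cfun_self]
  split_ifs <;> omega

lemma cfun_le_cfun_succ_left_add_one (x : Finset ℕ) (hij : i ≤ j) :
    cfun x i j ≤ cfun x (i + 1) j + 1 := by
  rw [← cfun_add x le_rfl hij, cfun_self]
  split_ifs <;> omega

lemma exists_cfun_eq_zero_of_mem (hi : i ∈ x) (hij : i ≤ j) (hneg : cfun x i j < 0) :
    ∃ t ∈ Ioo i j, cfun x i t = 0 := by
  refine exists_mem_Ioo_eq_zero_of_le_succ_add_one hij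
    (fun s hs => cfun_le_cfun_succ_right_add_one x (mem_Ico.1 hs).1) ?_ hneg
  simp [cfun_self, hi]

lemma exists_cfun_eq_zero_of_notMem (hj : j ∉ x) (hij : i ≤ j) (hpos : 0 < cfun x i j) :
    ∃ t ∈ Ioo i j, cfun x t j = 0 := by
  refine exists_mem_Ioo_eq_zero_of_le_succ_add_one hij
    (fun s hs => cfun_le_cfun_succ_left_add_one x (mem_Ico.1 hs).2.le) hpos ?_
  simp [cfun_self, hj]

noncomputable def matchRight (x : Finset ℕ) (i : ℕ) : ℕ :=
  sInf {j | i < j ∧ cfun x i j = 0}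

lemma lt_matchRight_and_cfun_eq_zero (hij : i < j) (h : cfun x i j = 0) :
    i < matchRight x i ∧ cfun x i (matchRight x i) = 0 :=
  Nat.sInf_mem (s := {j | i < j ∧ cfun x i j = 0}) ⟨j, hij, h⟩

lemma matchRight_le (hij : i < j) (h : cfun x i j = 0) : matchRight x i ≤ j :=
  Nat.sInf_le ⟨hij, h⟩

lemma cfun_ne_zero_of_lt_matchRight (hit : i < t) (ht : t < matchRight x i) : cfun x i t ≠ 0 :=
  fun h => Nat.notMem_of_lt_sInf ht ⟨hit, h⟩

lemma matchRight_notMem (hi : i ∈ x) (hij : i < j) (h : cfun x i j = 0) :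
    matchRight x i ∉ x := by
  intro hp
  obtain ⟨hip, hp0⟩ := lt_matchRight_and_cfun_eq_zero hij h
  have hneg : cfun x i (matchRight x i - 1) < 0 := by
    have := cfun_add x (i := i) (t := matchRight x i - 1) (j := matchRight x i) (by omega) (by omega)
    rw [Nat.sub_add_cancel (by omega), cfun_self, if_pos hp] at this
    omega
  obtain ⟨t, ht, ht0⟩ := exists_cfun_eq_zero_of_mem hi (by omega) hneg
  exact cfun_ne_zero_of_lt_matchRight (mem_Ioo.1 ht).1 (by have := (mem_Ioo.1 ht).2; omega) ht0

lemma cfun_matchRight_ne_zero (hi : i ∈ x) (hij : i < j) (h : cfun x i j = 0)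
    (ht : t ∈ Ioo i (matchRight x i)) : cfun x t (matchRight x i) ≠ 0 := by
  intro ht0
  obtain ⟨hit, htp⟩ := mem_Ioo.1 ht
  have hsplit := cfun_add x (i := i) (t := t - 1) (j := matchRight x i) (by omega) (by omega)
  rw [Nat.sub_add_cancel (by omega), ht0, (lt_matchRight_and_cfun_eq_zero hij h).2] at hsplit
  rcases Nat.lt_or_ge i (t - 1) with hlt | hge
  · exact cfun_ne_zero_of_lt_matchRight (x := x) hlt (by omega) (by omega)
  · rw [show t - 1 = i by omega, cfun_self, if_pos hi] at hsplit
    omega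

lemma mem_and_matchRight_eq (hj : j ∉ x) (hij : i < j) (h : cfun x i j = 0)
    (hmax : ∀ t ∈ Ioo i j, cfun x t j ≠ 0) : i ∈ x ∧ matchRight x i = j := by
  have hi : i ∈ x := by
    by_contra hi
    have hpos : 0 < cfun x (i + 1) j := by
      have := cfun_add x le_rfl hij.le
      rw [cfun_self, if_neg hi] at this
      omega
    obtain ⟨t, ht, ht0⟩ := exists_cfun_eq_zero_of_notMem hj hij hpos
    exact hmax t (Ioo_subset_Ioo_left i.le_succ ht) ht0
  refine ⟨hi, le_antisymm (matchRight_le hij h) (not_lt.1 fun hlt => ?_)⟩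
  obtain ⟨hip, hp0⟩ := lt_matchRight_and_cfun_eq_zero hij h
  have hsplit := cfun_add x hip.le hlt.le
  rw [hp0, h, zero_add] at hsplit
  have hne : matchRight x i + 1 ≠ j := by
    rintro rfl
    rw [cfun_self, if_neg hj] at hsplit
    omega
  exact hmax _ (mem_Ioo.2 ⟨by omega, by omega⟩) hsplit

lemma exists_matchRight_eq (hj : j ∉ x) (hij : i < j) (h : cfun x i j = 0) :
    ∃ i' ∈ Ico i j, i' ∈ x ∧ cfun x i' j = 0 ∧ matchRight x i' = j := by
  set i' := Nat.findGreatest (fun s => cfun x s j = 0) (j - 1)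
  have hii' : i ≤ i' := Nat.le_findGreatest (by omega) h
  have hi'j : i' < j := by have := Nat.findGreatest_le (P := fun s => cfun x s j = 0) (j - 1); omega
  have hi'0 : cfun x i' j = 0 := Nat.findGreatest_spec (P := fun s => cfun x s j = 0) (by omega) h
  have hmax : ∀ t ∈ Ioo i' j, cfun x t j ≠ 0 := fun t ht =>
    Nat.findGreatest_is_greatest (mem_Ioo.1 ht).1 (by have := (mem_Ioo.1 ht).2; omega)
  obtain ⟨hi'x, hmatch⟩ := mem_and_matchRight_eq hj hi'j hi'0 hmax
  exact ⟨i', mem_Ico.2 ⟨hii', hi'j⟩, hi'x, hi'0, hmatch⟩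

variable {n : ℕ}

lemma sgv_eq_one_iff : sgv n x i = 1 ↔ i ∈ x ∧ ∃ j ∈ Ioc i n, cfun x i j = 0 := by
  unfold sgv; split_ifs <;> simp_all

lemma sgv_eq_zero_iff : sgv n x i = 0 ↔ i ∉ x ∧ ∃ j ∈ Ico 1 i, cfun x j i = 0 := by
  unfold sgv; split_ifs <;> simp_all

lemma sgv_eq_one_or_two_of_mem (hi : i ∈ x) : sgv n x i = 1 ∨ sgv n x i = 2 := by
  unfold sgv; split_ifs <;> simp

lemma sgv_eq_zero_or_two_of_notMem (hi : i ∉ x) : sgv n x i = 0 ∨ sgv n x i = 2 := by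
  unfold sgv; split_ifs <;> simp

theorem card_filter_sgv_eq_one_eq_card_filter_sgv_eq_zero (n : ℕ) (x : Finset ℕ) :
    #{i ∈ Icc 1 n | sgv n x i = 1} = #{i ∈ Icc 1 n | sgv n x i = 0} := by
  refine card_bij (fun i _ => matchRight x i) (fun i hi => ?_) (fun a ha b hb hab => ?_) fun j hj => ?_
  · simp only [mem_filter, mem_Icc, sgv_eq_one_iff, mem_Ioc] at hi
    obtain ⟨⟨hi1, -⟩, hix, j, ⟨hij, hjn⟩, h⟩ := hi
    obtain ⟨hip, hp0⟩ := lt_matchRight_and_cfun_eq_zero hij h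
    simp only [mem_filter, mem_Icc, sgv_eq_zero_iff, mem_Ico]
    exact ⟨⟨by omega, (matchRight_le hij h).trans hjn⟩, matchRight_notMem hix hij h,
      i, ⟨hi1, hip⟩, hp0⟩
  · simp only [mem_filter, sgv_eq_one_iff, mem_Ioc] at ha hb
    obtain ⟨-, hax, j, ⟨haj, -⟩, ha0⟩ := ha
    obtain ⟨-, hbx, k, ⟨hbk, -⟩, hb0⟩ := hb
    by_contra hne
    rcases Nat.lt_or_gt_of_ne hne with hlt | hlt
    · obtain ⟨hbp, hbp0⟩ := lt_matchRight_and_cfun_eq_zero hbk hb0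
      rw [← hab] at hbp hbp0
      exact cfun_matchRight_ne_zero hax haj ha0 (mem_Ioo.2 ⟨hlt, hbp⟩) hbp0
    · obtain ⟨hap, hap0⟩ := lt_matchRight_and_cfun_eq_zero haj ha0
      rw [hab] at hap hap0
      exact cfun_matchRight_ne_zero hbx hbk hb0 (mem_Ioo.2 ⟨hlt, hap⟩) hap0
  · simp only [mem_filter, mem_Icc, sgv_eq_zero_iff, mem_Ico] at hj
    obtain ⟨⟨-, hjn⟩, hjx, i, ⟨hi1, hij⟩, h⟩ := hj
    obtain ⟨i', hi', hi'x, hi'0, hmatch⟩ := exists_matchRight_eq hjx hij h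
    obtain ⟨hii', hi'j⟩ := mem_Ico.1 hi'
    refine ⟨i', ?_, hmatch⟩
    simp only [mem_filter, mem_Icc, sgv_eq_one_iff, mem_Ioc]
    exact ⟨⟨by omega, by omega⟩, hi'x, j, ⟨hi'j, hjn⟩, hi'0⟩

lemma card_filter_sgv_eq_one_add_card_inter (hx : x ⊆ Icc 1 n) :
    #{i ∈ Icc 1 n | sgv n x i = 1} + #({i ∈ Icc 1 n | sgv n x i = 2} ∩ x) = #x := by
  rw [← card_union_of_disjoint (disjoint_left.2 fun i h1 h2 => by
    simp only [mem_filter, mem_inter] at h1 h2; omega)]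
  congr 1
  ext i
  simp only [mem_union, mem_inter, mem_filter]
  constructor
  · rintro (⟨-, h⟩ | ⟨-, h⟩)
    exacts [(sgv_eq_one_iff.1 h).1, h]
  · intro hi
    rcases sgv_eq_one_or_two_of_mem (n := n) hi with h | h
    exacts [Or.inl ⟨hx hi, h⟩, Or.inr ⟨⟨hx hi, h⟩, hi⟩]

lemma card_filter_sgv_eq_zero_add_card_sdiff :
    #{i ∈ Icc 1 n | sgv n x i = 0} + #({i ∈ Icc 1 n | sgv n x i = 2} \ x) = #(Icc 1 n \ x) := by
  rw [← card_union_of_disjoint (disjoint_left.2 fun i h1 h2 => by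
    simp only [mem_filter, mem_sdiff] at h1 h2; omega)]
  congr 1
  ext i
  simp only [mem_union, mem_sdiff, mem_filter]
  constructor
  · rintro (⟨hi, h⟩ | ⟨⟨hi, -⟩, h⟩)
    exacts [⟨hi, (sgv_eq_zero_iff.1 h).1⟩, ⟨hi, h⟩]
  · rintro ⟨hin, hi⟩
    rcases sgv_eq_zero_or_two_of_notMem (n := n) hi with h | h
    exacts [Or.inl ⟨hin, h⟩, Or.inr ⟨⟨hin, h⟩, hi⟩]

end Matching

theorem stmt_12_general (n : ℕ) (x : Finset ℕ) (hx : x ⊆ Finset.Icc 1 n) :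
    (((Finset.Icc 1 n).filter (fun i => sgv n x i = 2) ∩ x).card + n =
      (((Finset.Icc 1 n).filter (fun i => sgv n x i = 2)) \ x).card + 2 * x.card) ∧
    ((Finset.Icc 1 n).filter (fun i => sgv n x i = 1)).card =
      ((Finset.Icc 1 n).filter (fun i => sgv n x i = 0)).card ∧
    2 * ((Finset.Icc 1 n).filter (fun i => sgv n x i = 1)).card +
      ((Finset.Icc 1 n).filter (fun i => sgv n x i = 2)).card = n := by
  have hbij := card_filter_sgv_eq_one_eq_card_filter_sgv_eq_zero n x
  have hin := card_filter_sgv_eq_one_add_card_inter hx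
  have hout := card_filter_sgv_eq_zero_add_card_sdiff (n := n) (x := x)
  have hstar := card_inter_add_card_sdiff {i ∈ Icc 1 n | sgv n x i = 2} x
  have hall : #(Icc 1 n \ x) + #x = n := by
    rw [card_sdiff_add_card_eq_card hx, Nat.card_Icc, Nat.add_sub_cancel]
  exact ⟨by omega, hbij, by omega⟩

/-- for `x ⊆ [n]` with `|x| = k ≥ n/2`:
`|*(x) ∩ x| - |*(x) \ x| = 2k - n`, and `|1(x)| = |0(x)| = (n - |*(x)|)/2`. -/
theorem stmt_12 (n : ℕ) (x : Finset ℕ) (hx : x ⊆ Finset.Icc 1 n)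
    (hk : n ≤ 2 * x.card) :
    (((Finset.Icc 1 n).filter (fun i => sgv n x i = 2) ∩ x).card + n =
      (((Finset.Icc 1 n).filter (fun i => sgv n x i = 2)) \ x).card + 2 * x.card) ∧
    ((Finset.Icc 1 n).filter (fun i => sgv n x i = 1)).card =
      ((Finset.Icc 1 n).filter (fun i => sgv n x i = 0)).card ∧
    2 * ((Finset.Icc 1 n).filter (fun i => sgv n x i = 1)).card +
      ((Finset.Icc 1 n).filter (fun i => sgv n x i = 2)).card = n :=
  stmt_12_general n x hx
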